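/- With β = 2 - ζ₉⁴ - ζ₉⁵ and σ the generator of Gal(Q(ζ₉)⁺/Q) with σ(cos(π/9)) = cos(5π/9), the Galois orbit of β is {β, u₁⁻²β, u₂⁻²β}, i.e., σ(β) = u₁⁻²β and σ²(β) = u₂⁻²β. -/

import Mathlib

noncomputable section

/-- `ζ₉ = exp(2πi/9)`. -/
def z9 : ℂ := Complex.exp (2 * Real.pi * Complex.I / 9)

/-- The totally real cubic field `Q(ζ₉)⁺ = Q(2cos(π/9))`, as a subfield of `ℂ`. -/
def Kplus : IntermediateField ℚ ℂ :=
  IntermediateField.adjoin ℚ {((2 * Real.cos (Real.pi / 9) : ℝ) : ℂ)}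

def u1 : ℂ := z9 - z9 ^ 2 - z9 ^ 5

def u2 : ℂ := 1 - z9 ^ 4 - z9 ^ 5

/-!
With `t = 2 cos(π/9)` one has `t³ = 3t + 1`, `β = 2 + t`, `u₁ = t² - 2`, `u₂ = 1 + t`, and the
generator acts by `σ t = t² - t - 2` (from `cos(5π/9) + cos(π/9) = cos(2π/9)`), hence
`σ² t = 2 - t²`. Both claims then become polynomial identities in `t` modulo `t³ - 3t - 1`.
-/

open Real Complex

@[simp, norm_cast]
lemma IntermediateField.coe_ofNat {K L : Type*} [Field K] [Field L] [Algebra K L]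
    (S : IntermediateField K L) (n : ℕ) [n.AtLeastTwo] : ((ofNat(n) : S) : L) = ofNat(n) :=
  rfl

section CubicOrbit

variable {K F : Type*} [Field K] [FunLike F K K] [RingHomClass F K K] {t : K}

lemma sq_sub_two_ne_zero_of_cubic (ht : t ^ 3 - 3 * t - 1 = 0) : t ^ 2 - 2 ≠ 0 := by
  intro h
  have ht' : t = -1 := by linear_combination t * h - ht
  rw [ht'] at h
  norm_num at h

lemma one_add_ne_zero_of_cubic (ht : t ^ 3 - 3 * t - 1 = 0) : 1 + t ≠ 0 := by
  intro h
  rw [show t = -1 by linear_combination h] at ht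
  norm_num at ht

lemma map_map_eq_of_cubic (σ : F) (ht : t ^ 3 - 3 * t - 1 = 0) (hσ : σ t = t ^ 2 - t - 2) :
    σ (σ t) = 2 - t ^ 2 := by
  rw [hσ, map_sub, map_sub, map_pow, map_ofNat, hσ]
  linear_combination (t - 2) * ht

theorem map_two_add_of_cubic (σ : F) (ht : t ^ 3 - 3 * t - 1 = 0) (hσ : σ t = t ^ 2 - t - 2) :
    σ (2 + t) = (t ^ 2 - 2)⁻¹ ^ 2 * (2 + t) ∧ σ (σ (2 + t)) = (1 + t)⁻¹ ^ 2 * (2 + t) := by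
  have hσσ := map_map_eq_of_cubic σ ht hσ
  simp only [map_add, map_ofNat, inv_pow]
  rw [hσσ, hσ]
  constructor
  · rw [eq_inv_mul_iff_mul_eq₀ (pow_ne_zero 2 (sq_sub_two_ne_zero_of_cubic ht))]
    linear_combination (2 - t - t ^ 2 + t ^ 3) * ht
  · rw [eq_inv_mul_iff_mul_eq₀ (pow_ne_zero 2 (one_add_ne_zero_of_cubic ht))]
    linear_combination (-2 - t) * ht

end CubicOrbit

lemma cos_pi_div_nine_cubic :
    (2 * Real.cos (π / 9)) ^ 3 - 3 * (2 * Real.cos (π / 9)) - 1 = 0 := by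
  have h := Real.cos_three_mul (π / 9)
  rw [show 3 * (π / 9) = π / 3 by ring, Real.cos_pi_div_three] at h
  linear_combination -2 * h

lemma two_mul_cos_five_pi_div_nine :
    2 * Real.cos (5 * π / 9) = (2 * Real.cos (π / 9)) ^ 2 - 2 * Real.cos (π / 9) - 2 := by
  have h := Real.cos_add_cos (5 * π / 9) (π / 9)
  rw [show (5 * π / 9 + π / 9) / 2 = π / 3 by ring,
    show (5 * π / 9 - π / 9) / 2 = 2 * (π / 9) by ring, Real.cos_pi_div_three,
    Real.cos_two_mul] at h
  linear_combination 2 * h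

lemma IsPrimitiveRoot.pow_six_add_pow_three_add_one {R : Type*} [CommRing R] [NoZeroDivisors R]
    {ζ : R} (h : IsPrimitiveRoot ζ 9) : ζ ^ 6 + ζ ^ 3 + 1 = 0 := by
  have h3 : ζ ^ 3 - 1 ≠ 0 :=
    sub_ne_zero.2 (h.pow_ne_one_of_pos_of_lt (by norm_num) (by norm_num))
  refine (mul_eq_zero.1 ?_).resolve_left h3
  linear_combination h.pow_eq_one

lemma z9_isPrimitiveRoot : IsPrimitiveRoot z9 9 := by
  simpa [z9] using Complex.isPrimitiveRoot_exp 9 (by norm_num)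

lemma neg_z9_pow (m : ℕ) : -z9 ^ m = exp ((2 * m - 9) * π * I / 9) := by
  rw [z9, ← Complex.exp_nat_mul, ← exp_sub_pi_mul_I]
  congr 1
  ring

lemma two_mul_cos_pi_div_nine : 2 * Complex.cos (π / 9) = -(z9 ^ 4 + z9 ^ 5) := by
  rw [two_cos, neg_add, neg_z9_pow, neg_z9_pow, add_comm]
  congr 2 <;> push_cast <;> ring

lemma u1_eq_two_cos_sq_sub_two : u1 = (2 * Complex.cos (π / 9)) ^ 2 - 2 := by
  rw [two_mul_cos_pi_div_nine, u1]
  linear_combination (2 + z9 - z9 ^ 2 - 2 * z9 ^ 3 - z9 ^ 4) *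
    z9_isPrimitiveRoot.pow_six_add_pow_three_add_one

/-- For `σ` the generator of `Gal(Q(ζ₉)⁺/Q)` with `σ(cos(π/9)) = cos(5π/9)`:
`σ(β) = u₁⁻²β` and `σ²(β) = u₂⁻²β`, so the Galois orbit of `β` is `{β, u₁⁻²β, u₂⁻²β}`. -/
theorem stmt12 (σ : Kplus ≃ₐ[ℚ] Kplus) (c c5 U1 U2 B : Kplus)
    (hc : (c : ℂ) = ((Real.cos (Real.pi / 9) : ℝ) : ℂ))
    (hc5 : (c5 : ℂ) = ((Real.cos (5 * Real.pi / 9) : ℝ) : ℂ))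
    (hU1 : (U1 : ℂ) = u1) (hU2 : (U2 : ℂ) = u2)
    (hB : (B : ℂ) = 2 - z9 ^ 4 - z9 ^ 5)
    (hσ : σ c = c5) :
    σ B = U1⁻¹ ^ 2 * B ∧ σ (σ B) = U2⁻¹ ^ 2 * B := by
  push_cast at hc hc5
  have hcubic := congrArg ((↑) : ℝ → ℂ) cos_pi_div_nine_cubic
  have hcos5 := congrArg ((↑) : ℝ → ℂ) two_mul_cos_five_pi_div_nine
  push_cast at hcubic hcos5
  have ht : (2 * c) ^ 3 - 3 * (2 * c) - 1 = 0 :=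
    Subtype.ext <| by push_cast [hc]; exact hcubic
  have hσt : σ (2 * c) = (2 * c) ^ 2 - 2 * c - 2 :=
    Subtype.ext <| by rw [map_mul, map_ofNat, hσ]; push_cast [hc, hc5]; exact hcos5
  have hB' : B = 2 + 2 * c :=
    Subtype.ext <| by push_cast [hB, hc]; linear_combination -two_mul_cos_pi_div_nine
  have hU1' : U1 = (2 * c) ^ 2 - 2 :=
    Subtype.ext <| by push_cast [hU1, hc]; exact u1_eq_two_cos_sq_sub_two
  have hU2' : U2 = 1 + 2 * c :=
    Subtype.ext <| by push_cast [hU2, hc, u2]; linear_combination -two_mul_cos_pi_div_nine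
  rw [hB', hU1', hU2']
  exact map_two_add_of_cubic σ ht hσt
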